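/- If d·tanh(β) > 1 (with d > 1 and β > 0), then the map x ↦ d·φ(x) has exactly three fixed points: 0, a positive fixed point h⁺, and its negative -h⁺. Moreover d·φ(x) > x for all x ∈ (0, h⁺) and d·φ(x) < x for all x > h⁺. -/

import Mathlib

/-- The inverse hyperbolic tangent, arctanh x = (1/2)·log((1+x)/(1-x)). -/
noncomputable def artanh (x : ℝ) : ℝ := (1 / 2) * Real.log ((1 + x) / (1 - x))

/-- The one-step Ising tree recursion function φ(x) = arctanh(tanh β · tanh x). -/
noncomputable def phi (β x : ℝ) : ℝ := artanh (Real.tanh β * Real.tanh x)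

/-!
Put `t = tanh β` and `F x = d * φ x - x`. The derivative `φ' x = t / (1 + (1 - t²) sinh² x)`
is strictly decreasing on `[0, ∞)`, so `F` is strictly concave there. Since `F 0 = 0` and
`F' 0 = d t - 1 > 0`, `F` is positive just to the right of `0`, while `φ < β` makes `F` negative
for large `x`; so `F` has a zero `h⁺ > 0`, and strict concavity forces `F > 0` on `(0, h⁺)` and
`F < 0` beyond it. As `φ` is odd, the remaining fixed points are `0` and `-h⁺`.
-/

open Set Filter Topology
open Real hiding artanh

lemma artanh_odd : Function.Odd artanh := by
  intro x
  have h : (1 + -x) / (1 - -x) = ((1 + x) / (1 - x))⁻¹ := by rw [inv_div]; ring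
  rw [artanh, artanh, h, Real.log_inv]
  ring

lemma hasDerivAt_artanh {x : ℝ} (hx : x ∈ Ioo (-1) 1) :
    HasDerivAt artanh (1 - x ^ 2)⁻¹ x := by
  obtain ⟨h₁, h₂⟩ := hx
  have hsub : 1 - x ≠ 0 := by linarith
  have hadd : 1 + x ≠ 0 := by linarith
  have hsq : 1 - x ^ 2 ≠ 0 := by nlinarith
  have hquot := ((hasDerivAt_id x).const_add 1).div ((hasDerivAt_id x).const_sub 1) hsub
  refine ((hquot.log (div_ne_zero hadd hsub)).const_mul (1 / 2 : ℝ)).congr_deriv ?_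
  simp only [Pi.div_apply, id]
  field_simp
  ring

lemma hasDerivAt_tanh (x : ℝ) : HasDerivAt tanh (cosh x ^ 2)⁻¹ x := by
  have h := (hasDerivAt_sinh x).div (hasDerivAt_cosh x) (cosh_pos x).ne'
  rw [show sinh / cosh = tanh from funext fun y => (tanh_eq_sinh_div_cosh y).symm] at h
  refine h.congr_deriv ?_
  rw [← sq, ← sq, cosh_sq]
  ring

lemma tanh_pos {x : ℝ} (hx : 0 < x) : 0 < tanh x := by
  rw [tanh_eq_sinh_div_cosh]
  exact div_pos (sinh_pos_iff.2 hx) (cosh_pos x)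

lemma abs_tanh_mul_tanh_lt_one (x y : ℝ) : |tanh x * tanh y| < 1 := by
  rw [abs_mul]
  exact mul_lt_one_of_nonneg_of_lt_one_left (abs_nonneg _) (abs_tanh_lt_one x)
    (abs_tanh_lt_one y).le

lemma phi_odd (β : ℝ) : Function.Odd (phi β) := by
  intro x
  rw [phi, phi, tanh_neg, mul_neg, artanh_odd]

lemma phi_eq_real_artanh (β x : ℝ) : phi β x = Real.artanh (tanh β * tanh x) :=
  (Real.artanh_eq_half_log (Ioo_subset_Icc_self (abs_lt.1 (abs_tanh_mul_tanh_lt_one β x)))).symm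

lemma phi_lt {β : ℝ} (hβ : 0 < β) (x : ℝ) : phi β x < β := by
  rw [phi_eq_real_artanh]
  conv_rhs => rw [← Real.artanh_tanh β]
  exact Real.artanh_lt_artanh (abs_lt.1 (abs_tanh_mul_tanh_lt_one β x)).1 (tanh_lt_one β)
    (mul_lt_of_lt_one_right (tanh_pos hβ) (tanh_lt_one x))

lemma hasDerivAt_phi (β x : ℝ) :
    HasDerivAt (phi β) (tanh β / (1 + (1 - tanh β ^ 2) * sinh x ^ 2)) x := by
  have h := (hasDerivAt_artanh (abs_lt.1 (abs_tanh_mul_tanh_lt_one β x))).comp x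
    ((hasDerivAt_tanh x).const_mul (tanh β))
  refine h.congr_deriv ?_
  have hc := (cosh_pos x).ne'
  have hsq : 1 - (tanh β * tanh x) ^ 2 ≠ 0 := by
    linarith [(sq_lt_one_iff_abs_lt_one _).2 (abs_tanh_mul_tanh_lt_one β x)]
  have hden : 0 < 1 + (1 - tanh β ^ 2) * sinh x ^ 2 := by
    have := tanh_sq_lt_one β
    positivity
  rw [tanh_eq_sinh_div_cosh x] at hsq ⊢
  field_simp
  rw [cosh_sq]
  ring

@[fun_prop]
lemma continuous_phi (β : ℝ) : Continuous (phi β) :=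
  continuous_iff_continuousAt.2 fun x => (hasDerivAt_phi β x).continuousAt

lemma strictAntiOn_deriv_phi {β : ℝ} (hβ : 0 < β) :
    StrictAntiOn (fun x => tanh β / (1 + (1 - tanh β ^ 2) * sinh x ^ 2)) (Ici 0) := by
  intro x hx y hy hxy
  have ht := tanh_pos hβ
  have h1 : 0 < 1 - tanh β ^ 2 := by linarith [tanh_sq_lt_one β]
  have hs : sinh x ^ 2 < sinh y ^ 2 :=
    pow_lt_pow_left₀ (sinh_strictMono hxy) (sinh_nonneg_iff.2 hx) two_ne_zero
  dsimp only
  gcongr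

lemma strictConcaveOn_mul_phi_sub_id {β d : ℝ} (hβ : 0 < β) (hd : 0 < d) :
    StrictConcaveOn ℝ (Ici 0) (fun x => d * phi β x - x) := by
  have hderiv : ∀ x, HasDerivAt (fun x => d * phi β x - x)
      (d * (tanh β / (1 + (1 - tanh β ^ 2) * sinh x ^ 2)) - 1) x :=
    fun x => ((hasDerivAt_phi β x).const_mul d).sub (hasDerivAt_id x)
  refine StrictAntiOn.strictConcaveOn_of_deriv (convex_Ici 0) (by fun_prop) ?_
  rw [interior_Ici]
  intro x hx y hy hxy
  simp only [(hderiv _).deriv]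
  have := strictAntiOn_deriv_phi hβ (mem_Ici_of_Ioi hx) (mem_Ici_of_Ioi hy) hxy
  gcongr

lemma exists_lt_of_hasDerivAt_pos {f : ℝ → ℝ} {f' a : ℝ} (hf : HasDerivAt f f' a)
    (hf' : 0 < f') : ∃ x, a < x ∧ f a < f x := by
  have hslope : ∀ᶠ x in 𝓝[>] a, 0 < slope f a x :=
    (hasDerivAt_iff_tendsto_slope_left_right.1 hf).2.eventually (eventually_gt_nhds hf')
  obtain ⟨x, hx, hax⟩ := (hslope.and self_mem_nhdsWithin).exists
  exact ⟨x, hax, (slope_pos_iff_of_le (le_of_lt hax)).1 hx⟩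

lemma StrictConcaveOn.pos_of_mem_Ioo {s : Set ℝ} {f : ℝ → ℝ} (hf : StrictConcaveOn ℝ s f)
    {a b x : ℝ} (ha : a ∈ s) (hb : b ∈ s) (hfa : f a = 0) (hfb : f b = 0)
    (hx : x ∈ Ioo a b) : 0 < f x := by
  have hab : a < b := hx.1.trans hx.2
  simpa [hfa, hfb] using hf.lt_on_openSegment ha hb hab.ne (by rwa [openSegment_eq_Ioo hab])

lemma StrictConcaveOn.neg_of_lt {s : Set ℝ} {f : ℝ → ℝ} (hf : StrictConcaveOn ℝ s f)
    {a b x : ℝ} (ha : a ∈ s) (hx : x ∈ s) (hfa : f a = 0) (hfb : f b = 0) (hab : a < b)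
    (hbx : b < x) : f x < 0 := by
  have hax : a < x := hab.trans hbx
  have := hf.lt_on_openSegment ha hx hax.ne (by rw [openSegment_eq_Ioo hax]; exact ⟨hab, hbx⟩)
  rw [hfa, hfb] at this
  exact (min_lt_iff.1 this).resolve_left (lt_irrefl 0)

lemma Function.Odd.eq_zero_iff_of_pos {f : ℝ → ℝ} (hf : Function.Odd f) {p : ℝ} (hp : 0 < p)
    (hpos : ∀ x, 0 < x → (f x = 0 ↔ x = p)) (x : ℝ) :
    f x = 0 ↔ x = 0 ∨ x = p ∨ x = -p := by
  rcases lt_trichotomy x 0 with hx | rfl | hx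
  · rw [← neg_eq_zero, ← hf, hpos (-x) (neg_pos.2 hx)]
    grind
  · simp [hf.map_zero]
  · rw [hpos x hx]
    grind

theorem stmt_3_general (β d : ℝ) (hβ : 0 < β) (hw : 1 < d * Real.tanh β) :
    ∃ hp : ℝ, 0 < hp ∧
      (∀ x : ℝ, d * phi β x = x ↔ x = 0 ∨ x = hp ∨ x = -hp) ∧
      (∀ x ∈ Set.Ioo 0 hp, x < d * phi β x) ∧
      (∀ x : ℝ, hp < x → d * phi β x < x) := by
  have hd : 0 < d := pos_of_mul_pos_left (by linarith) (tanh_pos hβ).le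
  set F : ℝ → ℝ := fun x => d * phi β x - x
  have hconc : StrictConcaveOn ℝ (Ici 0) F := strictConcaveOn_mul_phi_sub_id hβ hd
  have hodd : Function.Odd F := fun x => by simp only [F, phi_odd β x]; ring
  have hF0 : F 0 = 0 := hodd.map_zero
  have hderiv0 : HasDerivAt F (d * tanh β - 1) 0 :=
    (((hasDerivAt_phi β 0).const_mul d).sub (hasDerivAt_id' (x := 0))).congr_deriv (by simp)
  obtain ⟨y, hy, hFy⟩ := exists_lt_of_hasDerivAt_pos hderiv0 (by linarith)
  have hFlarge : F (d * β + y) < 0 := by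
    linarith [mul_lt_mul_of_pos_left (phi_lt hβ (d * β + y)) hd]
  obtain ⟨p, hp, hFp⟩ : ∃ p ∈ Ioo y (d * β + y), F p = 0 :=
    intermediate_value_Ioo' (le_add_of_nonneg_left (mul_pos hd hβ).le) (by fun_prop)
      ⟨hFlarge, hF0 ▸ hFy⟩
  have hp0 : 0 < p := hy.trans hp.1
  have hpos : ∀ x ∈ Ioo 0 p, 0 < F x := fun x hx =>
    hconc.pos_of_mem_Ioo self_mem_Ici hp0.le hF0 hFp hx
  have hneg : ∀ x, p < x → F x < 0 := fun x hx =>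
    hconc.neg_of_lt self_mem_Ici (hp0.trans hx).le hF0 hFp hp0 hx
  have hzero : ∀ x, 0 < x → (F x = 0 ↔ x = p) := fun x hx => by
    refine ⟨fun h => ?_, fun h => h ▸ hFp⟩
    rcases lt_trichotomy x p with hxp | hxp | hxp
    · exact absurd h (hpos x ⟨hx, hxp⟩).ne'
    · exact hxp
    · exact absurd h (hneg x hxp).ne
  refine ⟨p, hp0, fun x => ?_, fun x hx => ?_, fun x hx => ?_⟩
  · rw [← sub_eq_zero]
    exact hodd.eq_zero_iff_of_pos hp0 hzero x
  · linarith [hpos x hx]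
  · linarith [hneg x hx]

theorem stmt_3 (β d : ℝ) (hβ : 0 < β) (hd : 1 < d) (hw : 1 < d * Real.tanh β) :
    ∃ hp : ℝ, 0 < hp ∧
      (∀ x : ℝ, d * phi β x = x ↔ x = 0 ∨ x = hp ∨ x = -hp) ∧
      (∀ x ∈ Set.Ioo 0 hp, x < d * phi β x) ∧
      (∀ x : ℝ, hp < x → d * phi β x < x) :=
  stmt_3_general β d hβ hw
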